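/- Let E = C([−1,1]; ℝ) with the supremum norm, let 𝟙 ∈ E be the constant function with value 1, and define the bounded operators on E: P by (Pf) = ((1/2)∫_{−1}^{1} f(x) dx)·𝟙, S by (Sf)(x) = f(−x), A := (−2·id − S) ∘ (id − P), and K by (Kf) = f(−1)·𝟙. Then for every α > 0 the semigroup generated by A + α·K is not individually eventually positive; in fact there exist a function f ∈ E with f ≥ 0 (pointwise), a number δ > 0 and a time t1 ≥ 0 such that e^{t(A + α·K)} f ≤ −δ·𝟙 (pointwise) for all t ≥ t1, where e^{tS} denotes the operator exponential of tS. -/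

import Mathlib

open Set MeasureTheory intervalIntegral NormedSpace

set_option synthInstance.maxHeartbeats 400000
set_option maxHeartbeats 1000000

noncomputable section

/-- The compact interval `[-1, 1]`. -/
abbrev II : Set ℝ := Set.Icc (-1 : ℝ) 1

/-- The Banach lattice `E = C([-1,1]; ℝ)`. -/
abbrev EE : Type := C(II, ℝ)

lemma neg_mem_II {x : ℝ} (hx : x ∈ II) : -x ∈ II := by
  obtain ⟨h1, h2⟩ := hx; exact ⟨by linarith, by linarith⟩

/-- The reflection `x ↦ -x` on `[-1,1]`. -/
def reflect : C(II, II) :=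
  ⟨fun x => ⟨-(x : ℝ), neg_mem_II x.2⟩,
    (continuous_neg.comp continuous_subtype_val).subtype_mk _⟩

/-- The reflection operator `S`, `(S f)(x) = f(-x)`. -/
def SOp : EE →L[ℝ] EE :=
  LinearMap.mkContinuous
    { toFun := fun f => f.comp reflect
      map_add' := fun f g => rfl
      map_smul' := fun c f => rfl }
    1
    (fun f => by
      rw [one_mul]
      refine (ContinuousMap.norm_le _ (norm_nonneg f)).mpr fun x => ?_
      exact f.norm_coe_le_norm _)

/-- The functional `f ↦ ∫_{-1}^{1} f(x) dx` on `C([-1,1]; ℝ)`. -/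
def intFunc : EE →L[ℝ] ℝ :=
  LinearMap.mkContinuous
    { toFun := fun f => ∫ x in (-1 : ℝ)..1, f (Set.projIcc (-1) 1 (by norm_num) x)
      map_add' := fun f g => by
        simp only [ContinuousMap.add_apply]
        exact integral_add
          ((f.continuous.comp continuous_projIcc).intervalIntegrable _ _)
          ((g.continuous.comp continuous_projIcc).intervalIntegrable _ _)
      map_smul' := fun c f => by
        simp only [ContinuousMap.smul_apply, RingHom.id_apply, smul_eq_mul]
        exact integral_smul c _ }
    2
    (fun f => by
      have h : ∀ x : ℝ, ‖f (Set.projIcc (-1) 1 (by norm_num) x)‖ ≤ ‖f‖ :=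
        fun x => f.norm_coe_le_norm _
      calc ‖∫ x in (-1 : ℝ)..1, f (Set.projIcc (-1) 1 (by norm_num) x)‖
          ≤ ‖f‖ * |1 - (-1 : ℝ)| :=
            intervalIntegral.norm_integral_le_of_norm_le_const fun x _ => h x
        _ = 2 * ‖f‖ := by rw [show |1 - (-1 : ℝ)| = 2 by norm_num]; ring)

/-- The averaging projection `P`, `P f = (½ ∫_{-1}^1 f dx) · 𝟙`. -/
def POp : EE →L[ℝ] EE :=
  ((1 / 2 : ℝ) • intFunc).smulRight (1 : EE)

/-- The operator `A = (-2·id - S) ∘ (id - P)`. -/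
def AOp : EE →L[ℝ] EE :=
  ((-2 : ℝ) • ContinuousLinearMap.id ℝ EE - SOp) ∘L (ContinuousLinearMap.id ℝ EE - POp)

/-- The rank-one perturbation `K`, `K f = f(-1) · 𝟙`. -/
def KOp : EE →L[ℝ] EE :=
  (ContinuousMap.evalCLM ℝ (⟨-1, by norm_num⟩ : II)).smulRight (1 : EE)

/-- The operator-norm topology on `EE →L[ℝ] EE` makes it a topological ring (this is
definitionally the canonical topology; we register it so that `NormedSpace.exp` applies). -/
instance : IsTopologicalRing (EE →L[ℝ] EE) := by
  with_unfolding_all exact (NonUnitalSeminormedRing.toIsTopologicalRing (α := EE →L[ℝ] EE))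

/-! ### Auxiliary material for the proof -/

lemma exp_apply_eigen (B : EE →L[ℝ] EE) (g : EE) (l : ℝ) (h : B g = l • g) :
    exp B g = Real.exp l • g := by
  have hpow : ∀ k : ℕ, (B ^ k) g = l ^ k • g := by
    intro k; induction k with
    | zero => simp
    | succ k ih =>
      rw [pow_succ, ContinuousLinearMap.mul_apply, h, _root_.map_smul, ih, smul_smul, pow_succ]
      ring_nf
  have hs : Summable fun k : ℕ => (Nat.factorial k : ℝ)⁻¹ • B ^ k :=
    expSeries_summable' (𝕂 := ℝ) (𝔸 := EE →L[ℝ] EE) B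
  have hmap := (ContinuousLinearMap.apply ℝ EE g).map_tsum hs
  rw [exp_eq_tsum (𝕂 := ℝ)]
  have happ : (∑' k : ℕ, (Nat.factorial k : ℝ)⁻¹ • B ^ k) g
      = ∑' k : ℕ, ((Nat.factorial k : ℝ)⁻¹ • B ^ k) g := by
    simpa using hmap
  rw [happ]
  have hterm : ∀ k : ℕ, ((Nat.factorial k : ℝ)⁻¹ • B ^ k) g
      = ((Nat.factorial k : ℝ)⁻¹ * l ^ k) • g := by
    intro k
    rw [ContinuousLinearMap.smul_apply, hpow, smul_smul]
  simp_rw [hterm]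
  have hsum : Summable fun k : ℕ => (Nat.factorial k : ℝ)⁻¹ * l ^ k := by
    simpa [div_eq_inv_mul] using Real.summable_pow_div_factorial l
  rw [hsum.tsum_smul_const]
  congr 1
  rw [Real.exp_eq_exp_ℝ, exp_eq_tsum (𝕂 := ℝ)]
  simp [smul_eq_mul]

lemma SOp_apply (f : EE) (x : II) : SOp f x = f ⟨-(x:ℝ), neg_mem_II x.2⟩ := rfl

lemma KOp_apply (f : EE) (x : II) : KOp f x = f ⟨-1, by norm_num⟩ := by
  simp [KOp, ContinuousMap.evalCLM]

lemma POp_apply (f : EE) (x : II) : POp f x = (1/2) * intFunc f := by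
  simp [POp]

lemma AOp_apply (f : EE) (x : II) :
    AOp f x = -2 * (f x - (1/2) * intFunc f)
      - (f ⟨-(x:ℝ), neg_mem_II x.2⟩ - (1/2) * intFunc f) := by
  simp only [AOp, ContinuousLinearMap.comp_apply, ContinuousLinearMap.sub_apply,
    ContinuousLinearMap.smul_apply, ContinuousLinearMap.id_apply, ContinuousMap.sub_apply,
    ContinuousMap.smul_apply, smul_eq_mul]
  rw [POp_apply, SOp_apply]
  simp only [ContinuousMap.sub_apply]
  rw [POp_apply]

lemma intFunc_eq (f : EE) (F : ℝ → ℝ) (h : ∀ (x : ℝ) (hx : x ∈ II), f ⟨x, hx⟩ = F x) :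
    intFunc f = ∫ x in (-1:ℝ)..1, F x := by
  show (∫ x in (-1:ℝ)..1, f (Set.projIcc (-1) 1 (by norm_num) x)) = _
  refine intervalIntegral.integral_congr fun x hx => ?_
  rw [Set.uIcc_of_le (by norm_num : (-1:ℝ) ≤ 1)] at hx
  rw [Set.projIcc_of_mem _ hx]
  exact h x hx

/-- The odd part (shifted) of `((1+x)/2)^n`. -/
def Onn (n : ℕ) : EE :=
  ⟨fun x => (((1+(x:ℝ))/2)^n - ((1-(x:ℝ))/2)^n)/2, by fun_prop⟩

/-- The even part of `((1+x)/2)^n`. -/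
def Enn (n : ℕ) : EE :=
  ⟨fun x => (((1+(x:ℝ))/2)^n + ((1-(x:ℝ))/2)^n)/2, by fun_prop⟩

/-- The function `((1+x)/2)^n`. -/
def qnn (n : ℕ) : EE := ⟨fun x => ((1+(x:ℝ))/2)^n, by fun_prop⟩

lemma Onn_apply (n : ℕ) (x : II) :
    Onn n x = (((1+(x:ℝ))/2)^n - ((1-(x:ℝ))/2)^n)/2 := rfl
lemma Enn_apply (n : ℕ) (x : II) :
    Enn n x = (((1+(x:ℝ))/2)^n + ((1-(x:ℝ))/2)^n)/2 := rfl
lemma qnn_apply (n : ℕ) (x : II) : qnn n x = ((1+(x:ℝ))/2)^n := rfl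

lemma J1 (n : ℕ) : (∫ x in (-1:ℝ)..1, ((1+x)/2)^n) = 2/((n:ℝ)+1) := by
  have h : ∀ x ∈ Set.uIcc (-1:ℝ) 1,
      HasDerivAt (fun y : ℝ => (2/((n:ℝ)+1)) * ((1+y)/2)^(n+1)) (((1+x)/2)^n) x := by
    intro x _
    have h1 : HasDerivAt (fun y : ℝ => (1+y)/2) (1/2) x := by
      simpa using ((hasDerivAt_id x).const_add 1).div_const 2
    have h2 := (h1.pow (n+1)).const_mul (2/((n:ℝ)+1))
    refine h2.congr_deriv ?_
    have : ((n:ℝ)+1) ≠ 0 := by positivity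
    simp only [Nat.add_sub_cancel, Nat.cast_add, Nat.cast_one]
    field_simp
  rw [intervalIntegral.integral_eq_sub_of_hasDerivAt h
    (Continuous.intervalIntegrable (by fun_prop) _ _)]
  norm_num

lemma J2 (n : ℕ) : (∫ x in (-1:ℝ)..1, ((1-x)/2)^n) = 2/((n:ℝ)+1) := by
  have h : ∀ x ∈ Set.uIcc (-1:ℝ) 1,
      HasDerivAt (fun y : ℝ => -(2/((n:ℝ)+1)) * ((1-y)/2)^(n+1)) (((1-x)/2)^n) x := by
    intro x _
    have h1 : HasDerivAt (fun y : ℝ => (1-y)/2) (-(1/2)) x := by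
      have := ((hasDerivAt_id x).const_sub 1).div_const 2
      norm_num at this ⊢
      exact this
    have h2 := (h1.pow (n+1)).const_mul (-(2/((n:ℝ)+1)))
    refine h2.congr_deriv ?_
    have : ((n:ℝ)+1) ≠ 0 := by positivity
    simp only [Nat.add_sub_cancel, Nat.cast_add, Nat.cast_one]
    field_simp
  rw [intervalIntegral.integral_eq_sub_of_hasDerivAt h
    (Continuous.intervalIntegrable (by fun_prop) _ _)]
  norm_num

lemma intFunc_one : intFunc (1 : EE) = 2 := by
  rw [intFunc_eq (1 : EE) (fun _ => 1) (fun x hx => rfl)]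
  simp
  norm_num

lemma intFunc_Onn (n : ℕ) : intFunc (Onn n) = 0 := by
  rw [intFunc_eq (Onn n) (fun x => (((1+x)/2)^n - ((1-x)/2)^n)/2) (fun x hx => rfl)]
  have i1 : IntervalIntegrable (fun x : ℝ => ((1+x)/2)^n) volume (-1) 1 :=
    Continuous.intervalIntegrable (by fun_prop) _ _
  have i2 : IntervalIntegrable (fun x : ℝ => ((1-x)/2)^n) volume (-1) 1 :=
    Continuous.intervalIntegrable (by fun_prop) _ _
  rw [intervalIntegral.integral_div, intervalIntegral.integral_sub i1 i2, J1, J2]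
  ring

lemma intFunc_Enn (n : ℕ) : intFunc (Enn n) = 2/((n:ℝ)+1) := by
  rw [intFunc_eq (Enn n) (fun x => (((1+x)/2)^n + ((1-x)/2)^n)/2) (fun x hx => rfl)]
  have i1 : IntervalIntegrable (fun x : ℝ => ((1+x)/2)^n) volume (-1) 1 :=
    Continuous.intervalIntegrable (by fun_prop) _ _
  have i2 : IntervalIntegrable (fun x : ℝ => ((1-x)/2)^n) volume (-1) 1 :=
    Continuous.intervalIntegrable (by fun_prop) _ _
  rw [intervalIntegral.integral_div, intervalIntegral.integral_add i1 i2, J1, J2]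
  have : ((n:ℝ)+1) ≠ 0 := by positivity
  field_simp
  ring

/-- **Example 2.4(c)** (semigroup part). -/
theorem semigroup_of_perturbed_operator_not_eventually_positive :
    ∀ α : ℝ, 0 < α →
      (¬ ∀ f : EE, (∀ x : II, 0 ≤ f x) →
          ∃ t₀ : ℝ, 0 ≤ t₀ ∧ ∀ t : ℝ, t₀ ≤ t →
            ∀ x : II, 0 ≤ exp (t • (AOp + α • KOp)) f x) ∧
        ∃ f : EE, (∀ x : II, 0 ≤ f x) ∧
          ∃ δ : ℝ, 0 < δ ∧ ∃ t₁ : ℝ, 0 ≤ t₁ ∧ ∀ t : ℝ, t₁ ≤ t →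
            ∀ x : II, exp (t • (AOp + α • KOp)) f x ≤ -δ := by
  intro α hα
  obtain ⟨n, hn⟩ := exists_nat_gt (3*(α+1)/α)
  have hα1 : (0:ℝ) < α + 1 := by linarith
  have hα3 : (0:ℝ) < α + 3 := by linarith
  have hN : (0:ℝ) < (n:ℝ) + 1 := by positivity
  have hn0 : n ≠ 0 := by
    rintro rfl
    have h1 : (0:ℝ) < 3*(α+1)/α := by positivity
    simp only [Nat.cast_zero] at hn
    linarith
  set B : EE →L[ℝ] EE := AOp + α • KOp with hB
  set s' : ℝ := α/(2*(α+1)) with hs'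
  set β : ℝ := (3/((n:ℝ)+1) + α/2)/(α+3) with hβ
  set c₀ : ℝ := β - s' with hc₀
  set g1 : EE := Onn n + s' • (1:EE) with hg1
  set g3 : EE := Enn n - β • (1:EE) with hg3
  -- integrals
  have hig1 : intFunc g1 = 2*s' := by
    rw [hg1, map_add, _root_.map_smul, intFunc_Onn, intFunc_one, smul_eq_mul]
    ring
  have hig3 : intFunc g3 = 2/((n:ℝ)+1) - 2*β := by
    rw [hg3, map_sub, _root_.map_smul, intFunc_Enn, intFunc_one, smul_eq_mul]
    ring
  -- eigenvector equations
  have hB1 : B (1:EE) = α • (1:EE) := by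
    ext x
    simp only [hB, ContinuousLinearMap.add_apply, ContinuousLinearMap.smul_apply,
      ContinuousMap.add_apply, ContinuousMap.smul_apply, smul_eq_mul]
    rw [AOp_apply, KOp_apply, intFunc_one]
    simp only [ContinuousMap.one_apply]
    ring
  have hBg1 : B g1 = (-1 : ℝ) • g1 := by
    ext x
    simp only [hB, ContinuousLinearMap.add_apply, ContinuousLinearMap.smul_apply,
      ContinuousMap.add_apply, ContinuousMap.smul_apply, smul_eq_mul]
    rw [AOp_apply, KOp_apply, hig1]
    simp only [hg1, ContinuousMap.add_apply, ContinuousMap.smul_apply,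
      ContinuousMap.one_apply, Onn_apply, smul_eq_mul]
    have e0 : ((1 + ((⟨-1, by norm_num⟩ : II) : ℝ))/2)^n = 0 := by
      norm_num [zero_pow hn0]
    have e1 : ((1 - ((⟨-1, by norm_num⟩ : II) : ℝ))/2)^n = 1 := by
      norm_num
    rw [e0, e1, hs']
    have hne : (α + 1) ≠ 0 := ne_of_gt hα1
    field_simp
    ring
  have hBg3 : B g3 = (-3 : ℝ) • g3 := by
    ext x
    simp only [hB, ContinuousLinearMap.add_apply, ContinuousLinearMap.smul_apply,
      ContinuousMap.add_apply, ContinuousMap.smul_apply, smul_eq_mul]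
    rw [AOp_apply, KOp_apply, hig3]
    simp only [hg3, ContinuousMap.sub_apply, ContinuousMap.smul_apply,
      ContinuousMap.one_apply, Enn_apply, smul_eq_mul]
    have e0 : ((1 + ((⟨-1, by norm_num⟩ : II) : ℝ))/2)^n = 0 := by
      norm_num [zero_pow hn0]
    have e1 : ((1 - ((⟨-1, by norm_num⟩ : II) : ℝ))/2)^n = 1 := by
      norm_num
    rw [e0, e1, hβ]
    have hne : (α + 3) ≠ 0 := ne_of_gt hα3
    have hne2 : ((n:ℝ)+1) ≠ 0 := ne_of_gt hN
    field_simp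
    ring
  -- decomposition of q
  have hdecomp : qnn n = c₀ • (1:EE) + g1 + g3 := by
    ext x
    simp only [hg1, hg3, hc₀, ContinuousMap.add_apply, ContinuousMap.sub_apply,
      ContinuousMap.smul_apply, ContinuousMap.one_apply, Onn_apply, Enn_apply,
      qnn_apply, smul_eq_mul]
    ring
  -- positivity of q
  have hq0 : ∀ x : II, 0 ≤ qnn n x := by
    intro x
    rw [qnn_apply]
    have hx1 : -1 ≤ (x:ℝ) := x.2.1
    exact pow_nonneg (by linarith) n
  -- negativity of c₀
  have hkey2 : 3*(α+1) < α*((n:ℝ)+1) := by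
    have h1 : 3*(α+1)/α < (n:ℝ)+1 := lt_trans hn (lt_add_one _)
    calc 3*(α+1) = 3*(α+1)/α * α := by field_simp
      _ < ((n:ℝ)+1) * α := by exact mul_lt_mul_of_pos_right h1 hα
      _ = α*((n:ℝ)+1) := by ring
  have hc₀neg : c₀ < 0 := by
    rw [hc₀, sub_neg, hβ, hs', div_lt_div_iff₀ hα3 (by linarith : (0:ℝ) < 2*(α+1))]
    have h3N : 3/((n:ℝ)+1) < α/(α+1) := by
      rw [div_lt_div_iff₀ hN hα1]
      linarith
    have hmul := mul_lt_mul_of_pos_right h3N (show (0:ℝ) < 2*(α+1) by linarith)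
    have heq : α/(α+1)*(2*(α+1)) = 2*α := by field_simp
    nlinarith [hmul, heq]
  set δ : ℝ := -c₀/2 with hδ
  have hδpos : 0 < δ := by rw [hδ]; linarith
  set t₁ : ℝ := max 0 (-Real.log (δ/2)) with ht₁
  have ht₁0 : 0 ≤ t₁ := le_max_left _ _
  -- the key estimate
  have key : ∀ t : ℝ, t₁ ≤ t → ∀ x : II, exp (t • B) (qnn n) x ≤ -δ := by
    intro t ht x
    have ht0 : 0 ≤ t := le_trans ht₁0 ht
    have hexp1 : exp (t • B) (1:EE) = Real.exp (t*α) • (1:EE) :=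
      exp_apply_eigen _ _ _ (by rw [ContinuousLinearMap.smul_apply, hB1, smul_smul])
    have hexpg1 : exp (t • B) g1 = Real.exp (t*(-1)) • g1 :=
      exp_apply_eigen _ _ _ (by rw [ContinuousLinearMap.smul_apply, hBg1, smul_smul])
    have hexpg3 : exp (t • B) g3 = Real.exp (t*(-3)) • g3 :=
      exp_apply_eigen _ _ _ (by rw [ContinuousLinearMap.smul_apply, hBg3, smul_smul])
    rw [hdecomp, map_add, map_add, _root_.map_smul, hexp1, hexpg1, hexpg3]
    simp only [ContinuousMap.add_apply, ContinuousMap.smul_apply, smul_eq_mul,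
      ContinuousMap.one_apply, mul_one]
    -- pointwise bounds on g1 and g3
    have hx1 : -1 ≤ (x:ℝ) := x.2.1
    have hx2 : (x:ℝ) ≤ 1 := x.2.2
    have ha0 : (0:ℝ) ≤ (1+(x:ℝ))/2 := by linarith
    have ha1 : (1+(x:ℝ))/2 ≤ 1 := by linarith
    have hb0 : (0:ℝ) ≤ (1-(x:ℝ))/2 := by linarith
    have hb1 : (1-(x:ℝ))/2 ≤ 1 := by linarith
    have hap : ((1+(x:ℝ))/2)^n ≤ 1 := pow_le_one₀ ha0 ha1
    have hbp : ((1-(x:ℝ))/2)^n ≤ 1 := pow_le_one₀ hb0 hb1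
    have hap0 : 0 ≤ ((1+(x:ℝ))/2)^n := pow_nonneg ha0 n
    have hbp0 : 0 ≤ ((1-(x:ℝ))/2)^n := pow_nonneg hb0 n
    have hs'le : s' ≤ 1/2 := by
      rw [hs', div_le_div_iff₀ (by linarith : (0:ℝ) < 2*(α+1)) (by norm_num : (0:ℝ) < 2)]
      linarith
    have hβ0 : 0 ≤ β := by rw [hβ]; positivity
    have hg1x : g1 x ≤ 1 := by
      simp only [hg1, ContinuousMap.add_apply, ContinuousMap.smul_apply,
        ContinuousMap.one_apply, Onn_apply, smul_eq_mul]
      linarith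
    have hg3x : g3 x ≤ 1 := by
      simp only [hg3, ContinuousMap.sub_apply, ContinuousMap.smul_apply,
        ContinuousMap.one_apply, Enn_apply, smul_eq_mul]
      linarith
    -- exponential bounds
    have he1 : Real.exp (t*(-1)) ≤ δ/2 := by
      have hlog : -Real.log (δ/2) ≤ t := le_trans (le_max_right _ _) ht
      have : t*(-1) ≤ Real.log (δ/2) := by linarith
      calc Real.exp (t*(-1)) ≤ Real.exp (Real.log (δ/2)) := Real.exp_le_exp.mpr this
        _ = δ/2 := Real.exp_log (by linarith)
    have he3 : Real.exp (t*(-3)) ≤ δ/2 := by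
      refine le_trans (Real.exp_le_exp.mpr ?_) he1
      nlinarith
    have hegrow : (1:ℝ) ≤ Real.exp (t*α) := Real.one_le_exp (by positivity)
    have p1 : Real.exp (t*(-1)) * g1 x ≤ δ/2 :=
      le_trans (mul_le_mul_of_nonneg_left hg1x (Real.exp_nonneg _)) (by simpa using he1)
    have p3 : Real.exp (t*(-3)) * g3 x ≤ δ/2 :=
      le_trans (mul_le_mul_of_nonneg_left hg3x (Real.exp_nonneg _)) (by simpa using he3)
    have pc : c₀ * Real.exp (t*α) ≤ c₀ := by
      nlinarith [hegrow, hc₀neg]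
    have hc₀δ : c₀ = -(2*δ) := by rw [hδ]; ring
    linarith
  refine ⟨?_, qnn n, hq0, δ, hδpos, t₁, ht₁0, key⟩
  intro hall
  obtain ⟨t₀, ht₀0, hpos⟩ := hall (qnn n) hq0
  have h1 := hpos (max t₀ t₁) (le_max_left _ _) ⟨0, by norm_num⟩
  have h2 := key (max t₀ t₁) (le_max_right _ _) ⟨0, by norm_num⟩
  linarith

end
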